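/- For every ℓ > 0 there exist ternary relations Π⁽ʲ⁾ (1 ≤ j ≤ ℓ) on forms × forms × configurations such that for all forms φ, χ and molecules σ, α: φ * σ is the j-th component of the ℓ-tuple χ * α if and only if Π⁽ʲ⁾(φ, χ, conf(σ,α)) holds. -/

import Mathlib

open scoped Classical

/-- An abstract model of hereditarily finite sets over a set `A` of atoms,
together with the extension of permutations of atoms to all objects. -/
structure HFModel (A : Type) : Type 1 where
  Obj : Type
  atom : A → Obj
  mkSet : Finset Obj → Obj
  members : Obj → Finset Obj
  act : Equiv.Perm A → Obj → Obj
  atom_injective : Function.Injective atom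
  atom_ne_mkSet : ∀ a s, atom a ≠ mkSet s
  members_mkSet : ∀ s, members (mkSet s) = s
  members_atom : ∀ a, members (atom a) = ∅
  atom_or_set : ∀ x, (∃ a, x = atom a) ∨ (∃ s, x = mkSet s)
  act_atom : ∀ π a, act π (atom a) = atom (π a)
  act_mkSet : ∀ π s, act π (mkSet s) = mkSet (s.image (act π))
  act_one : ∀ x, act 1 x = x
  act_mul : ∀ π ρ x, act (π * ρ) x = act π (act ρ x)

/-- Abstract 2-configurations for `k`-molecules with colours in `κ`. -/
structure Config2 (k : ℕ) (κ : Type) : Type where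
  rel : Fin k → Fin k → Bool
  col₁ : Fin k → κ
  col₂ : Fin k → κ

/-- The configuration of a pair of `k`-molecules. -/
def conf {A κ : Type} [DecidableEq A] {k : ℕ} (col : A → κ) (τ σ : Fin k → A) :
    Config2 k κ :=
  ⟨fun p q => decide (τ p = σ q), col ∘ τ, col ∘ σ⟩

/-- `k`-forms. -/
inductive Form (k : ℕ) (κ : Type) : Type where
  | atom : Fin k → Form k κ
  | set : List (Form k κ × Config2 k κ) → Form k κ

/-- Evaluation `φ * σ` of a `k`-form on a `k`-molecule. -/
noncomputable def evalForm {A κ : Type} [DecidableEq A] [Fintype A] {k : ℕ}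
    (M : HFModel A) (col : A → κ) : (Fin k → A) → Form k κ → M.Obj
  | σ, .atom p => M.atom (σ p)
  | σ, .set l =>
      M.mkSet <| (l.attach.map (fun x =>
        (Finset.univ.filter
            (fun τ : Fin k → A => Function.Injective τ ∧ conf col τ σ = x.1.2)).image
          (fun τ => evalForm M col τ x.1.1))).foldr (· ∪ ·) ∅
  termination_by σ φ => sizeOf φ
  decreasing_by
    obtain ⟨⟨φ', E'⟩, hmem⟩ := x
    have h := List.sizeOf_lt_of_mem hmem
    simp at h ⊢
    omega

/-- The orbit `G x` of an object under a finite set of permutations, as an object. -/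
noncomputable def orbitObj {A : Type} (M : HFModel A) (G : Finset (Equiv.Perm A))
    (x : M.Obj) : M.Obj :=
  M.mkSet (G.image (fun g => M.act g x))

/-- The object `⋃_{h ∈ H} φ * (h ∘ σ)`. -/
noncomputable def unionEval {A κ : Type} [DecidableEq A] [Fintype A] {k : ℕ}
    (M : HFModel A) (col : A → κ) (H : Finset (Equiv.Perm A)) (φ : Form k κ)
    (σ : Fin k → A) : M.Obj :=
  M.mkSet (H.biUnion (fun h => M.members (evalForm M col (⇑h ∘ σ) φ)))

/-- The orbit-form evaluation `(φ,G,H) * σ = G(⋃_{h∈H} φ * hσ)`. -/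
noncomputable def orbitEval {A κ : Type} [DecidableEq A] [Fintype A] {k : ℕ}
    (M : HFModel A) (col : A → κ) (φ : Form k κ) (G H : Finset (Equiv.Perm A))
    (σ : Fin k → A) : M.Obj :=
  orbitObj M G (unionEval M col H φ σ)

/-- A finite set of permutations forming a subgroup. -/
def IsSubgroupF {A : Type} (G : Finset (Equiv.Perm A)) : Prop :=
  (1 : Equiv.Perm A) ∈ G ∧ (∀ g ∈ G, g⁻¹ ∈ G) ∧ ∀ g ∈ G, ∀ h ∈ G, g * h ∈ G

/-- Colour-preserving permutations (automorphisms). -/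
def IsAut {A κ : Type} (col : A → κ) (π : Equiv.Perm A) : Prop :=
  ∀ a, col (π a) = col a

/-- `X` is a support of object `x`. -/
def SupportsObj {A κ : Type} (M : HFModel A) (col : A → κ) (X : Set A) (x : M.Obj) : Prop :=
  ∀ π : Equiv.Perm A, IsAut col π → (∀ a ∈ X, π a = a) → M.act π x = x

/-- Transitive-closure membership. -/
inductive InTC {A : Type} (M : HFModel A) : M.Obj → M.Obj → Prop where
  | mem {x y} : x ∈ M.members y → InTC M x y
  | trans {x z y} : x ∈ M.members z → InTC M z y → InTC M x y

/-- `y` is a transitive set. -/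
def TransitiveObj {A : Type} (M : HFModel A) (y : M.Obj) : Prop :=
  ∀ z ∈ M.members y, ∀ w ∈ M.members z, w ∈ M.members y

/-- `x` is `k`-skew-symmetric. -/
def SkewSym {A κ : Type} (M : HFModel A) (col : A → κ) (k : ℕ) (x : M.Obj) : Prop :=
  ∃ (G : Finset (Equiv.Perm A)) (y : M.Obj), IsSubgroupF G ∧ x = orbitObj M G y ∧
    TransitiveObj M y ∧
    ∀ z, (z = y ∨ InTC M z y) →
      ∃ X : Finset A, X.card ≤ k ∧ SupportsObj M col X (orbitObj M G z)

/-- Kuratowski pair `(x,y) = {{x},{x,y}}`. -/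
noncomputable def kpair {A : Type} (M : HFModel A) (x y : M.Obj) : M.Obj :=
  M.mkSet {M.mkSet {x}, M.mkSet {x, y}}

/-- `ℓ`-tuples represented via iterated Kuratowski pairing. -/
noncomputable def tupleObj {A : Type} (M : HFModel A) :
    (ℓ : ℕ) → (Fin ℓ → M.Obj) → M.Obj
  | 0, _ => M.mkSet ∅
  | 1, f => f 0
  | (n + 2), f => kpair M (f 0) (tupleObj M (n + 1) (fun i => f i.succ))


/-!
Whether `φ * σ` is the `j`-th component of `χ * α` depends only on `φ`, `χ` and `conf σ α`,
so `Π⁽ʲ⁾` can be taken to be that property, demanded in every rich model realising the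
configuration. The transfer between two models rests on one extension step: with `3k` atoms
of each colour, a molecule can be copied into the other model so that its configurations
with two given molecules (configured alike in both models) are preserved. Induction on forms
then transfers equality and membership of evaluated forms. Components of a Kuratowski pair
`(x, y)` are read off through membership: `x` is what lies in every member, and an element
of some member is `y` unless it is `x` with `x ≠ y`, and `x = y` shows in the pair having a
single member.
-/

open Function

namespace Form

variable {k : ℕ} {κ : Type}

def children : Form k κ → List (Form k κ × Config2 k κ)
  | .atom _ => []
  | .set l => l

@[simp] theorem children_atom (p : Fin k) : (Form.atom p : Form k κ).children = [] := rfl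

@[simp] theorem children_set (l : List (Form k κ × Config2 k κ)) : (Form.set l).children = l :=
  rfl

theorem mem_induction {P : Form k κ → Prop} (atom : ∀ p, P (.atom p))
    (set : ∀ l, (∀ x ∈ l, P (Prod.fst x)) → P (.set l)) : ∀ φ, P φ
  | .atom p => atom p
  | .set l => set l fun x _ => mem_induction atom set x.1
termination_by φ => sizeOf φ
decreasing_by
  have := List.sizeOf_lt_of_mem ‹x ∈ l›
  cases x
  simp only [Prod.mk.sizeOf_spec, Form.set.sizeOf_spec] at this ⊢
  omega

end Form

section Configurations

variable {κ : Type} {k : ℕ} {A A' : Type} [DecidableEq A] [DecidableEq A'] {col : A → κ}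
  {col' : A' → κ}

theorem conf_eq_conf_iff {τ σ : Fin k → A} {τ' σ' : Fin k → A'} :
    conf col τ σ = conf col' τ' σ' ↔
      (∀ p q, τ p = σ q ↔ τ' p = σ' q) ∧ (∀ p, col (τ p) = col' (τ' p)) ∧
        ∀ q, col (σ q) = col' (σ' q) := by
  simp only [conf, Config2.mk.injEq, funext_iff, Function.comp_apply, decide_eq_decide]

theorem conf_swap {τ σ : Fin k → A} {τ' σ' : Fin k → A'}
    (h : conf col τ σ = conf col' τ' σ') : conf col σ τ = conf col' σ' τ' := by
  rw [conf_eq_conf_iff] at h ⊢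
  exact ⟨fun p q => by rw [eq_comm, h.1, eq_comm], h.2.2, h.2.1⟩

theorem conf_self_eq_of_conf_eq {τ α : Fin k ↪ A} {τ' α' : Fin k ↪ A'}
    (h : conf col τ α = conf col' τ' α') : conf col α α = conf col' α' α' := by
  have hcol := (conf_eq_conf_iff.1 h).2.2
  exact conf_eq_conf_iff.2 ⟨fun p q => by simp, hcol, hcol⟩

end Configurations

section Extension

variable {κ : Type} {k : ℕ} {A A' : Type}

theorem exists_fresh_injective {ι : Type} [Fintype ι] [Fintype A] [DecidableEq A]
    (col : A → κ) (d : ι → κ) (S : Finset A)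
    (hcard : ∀ c, Fintype.card ι + S.card ≤ (Finset.univ.filter (fun a => col a = c)).card) :
    ∃ g : ι → A, Injective g ∧ (∀ i, col (g i) = d i) ∧ ∀ i, g i ∉ S := by
  have e : ∀ c, {i // d i = c} ↪ {a // col a = c ∧ a ∉ S} := fun c =>
    Classical.choice <| Function.Embedding.nonempty_of_card_le <| by
      have hsub : Finset.univ.filter (fun a => col a = c) ⊆
          Finset.univ.filter (fun a => col a = c ∧ a ∉ S) ∪ S := by
        intro a
        by_cases a ∈ S <;> simp_all
      have hfresh := (Finset.card_le_card hsub).trans (Finset.card_union_le _ _)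
      have hfibre := Fintype.card_subtype_le (fun i => d i = c)
      rw [Fintype.card_subtype] at hfibre ⊢
      rw [Fintype.card_subtype]
      linarith [hcard c]
  have he : ∀ c c' (x : {i // d i = c}) (y : {i // d i = c'}),
      ((e c x : {a // col a = c ∧ a ∉ S}) : A) = e c' y → x.1 = y.1 := by
    intro c c' x y h
    obtain rfl : c = c' := by rw [← (e c x).2.1, ← (e c' y).2.1, h]
    exact congrArg Subtype.val ((e c).injective (Subtype.ext h))
  exact ⟨fun i => e (d i) ⟨i, rfl⟩, fun i j h => he _ _ _ _ h, fun i => (e (d i) _).2.1,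
    fun i => (e (d i) _).2.2⟩

theorem exists_embedding_extension {ι ι' : Type} [Fintype ι] [Fintype ι'] [Fintype A']
    [DecidableEq A'] {col : A → κ} {col' : A' → κ} (u : ι → A) (u' : ι → A')
    (hu : ∀ x y, u x = u y ↔ u' x = u' y) (hcol : ∀ x, col' (u' x) = col (u x)) (τ : ι' ↪ A)
    (hcard : ∀ c, Fintype.card ι' + Fintype.card ι ≤
      (Finset.univ.filter (fun a => col' a = c)).card) :
    ∃ τ' : ι' ↪ A', (∀ i x, τ' i = u' x ↔ τ i = u x) ∧ ∀ i, col' (τ' i) = col (τ i) := by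
  obtain ⟨g, hg, hgcol, hgS⟩ := exists_fresh_injective col' (col ∘ τ) (Finset.univ.image u')
    fun c => (Nat.add_le_add_left (Finset.card_image_le.trans_eq Finset.card_univ) _).trans
      (hcard c)
  have hgu : ∀ i x, g i ≠ u' x := fun i x h => hgS i (h ▸ Finset.mem_image_of_mem _ (by simp))
  -- points already in the range of `u` follow `u ↦ u'`, the others go to fresh atoms
  let f : ι' → A' := fun i => if h : ∃ x, u x = τ i then u' h.choose else g i
  have hf : ∀ i x, f i = u' x ↔ τ i = u x := by
    intro i x
    by_cases h : ∃ x, u x = τ i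
    · simp only [f, dif_pos h, ← hu, h.choose_spec]
    · simp only [f, dif_neg h, hgu, false_iff]
      exact fun h' => h ⟨x, h'.symm⟩
  have hf_inj_of : ∀ i j, f i = f j → (∃ x, u x = τ i) → i = j := by
    rintro i j hij ⟨x, hx⟩
    have hi : f i = u' x := (hf i x).2 hx.symm
    exact τ.injective (hx ▸ ((hf j x).1 (hij ▸ hi)).symm)
  refine ⟨⟨f, fun i j hij => ?_⟩, hf, fun i => ?_⟩
  · by_cases hi : ∃ x, u x = τ i
    · exact hf_inj_of i j hij hi
    by_cases hj : ∃ x, u x = τ j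
    · exact (hf_inj_of j i hij.symm hj).symm
    · simp only [f, dif_neg hi, dif_neg hj] at hij
      exact hg hij
  · show col' (f i) = col (τ i)
    by_cases h : ∃ x, u x = τ i
    · simp only [f, dif_pos h, hcol, h.choose_spec]
    · simp only [f, dif_neg h, hgcol, Function.comp_apply]

def IsRich [Fintype A] (k : ℕ) (col : A → κ) : Prop :=
  ∀ c, 3 * k ≤ (Finset.univ.filter (fun a : A => col a = c)).card

theorem exists_conf_extension [DecidableEq A] [Fintype A'] [DecidableEq A']
    {col : A → κ} {col' : A' → κ} (hrich' : IsRich k col')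
    {μ ν : Fin k ↪ A} {μ' ν' : Fin k ↪ A'} (hc : conf col μ ν = conf col' μ' ν')
    (τ : Fin k ↪ A) :
    ∃ τ' : Fin k ↪ A', conf col' τ' μ' = conf col τ μ ∧ conf col' τ' ν' = conf col τ ν := by
  obtain ⟨hrel, hμcol, hνcol⟩ := conf_eq_conf_iff.1 hc
  have hu : ∀ x y, Sum.elim μ ν x = Sum.elim μ ν y ↔ Sum.elim μ' ν' x = Sum.elim μ' ν' y := by
    rintro (p | p) (q | q)
    · simp
    · exact hrel p q
    · exact eq_comm.trans ((hrel q p).trans eq_comm)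
    · simp
  have hcol : ∀ x, col' (Sum.elim μ' ν' x) = col (Sum.elim μ ν x) := by
    rintro (p | p)
    · exact (hμcol p).symm
    · exact (hνcol p).symm
  have hcard : ∀ c, Fintype.card (Fin k) + Fintype.card (Fin k ⊕ Fin k) ≤
      (Finset.univ.filter (fun a => col' a = c)).card := by
    intro c
    simp only [Fintype.card_sum, Fintype.card_fin]
    linarith [hrich' c]
  obtain ⟨τ', hτ', hτ'col⟩ := exists_embedding_extension _ _ hu hcol τ hcard
  refine ⟨τ', conf_eq_conf_iff.2 ?_, conf_eq_conf_iff.2 ?_⟩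
  · exact ⟨fun p q => hτ' p (.inl q), hτ'col, fun q => (hμcol q).symm⟩
  · exact ⟨fun p q => hτ' p (.inr q), hτ'col, fun q => (hνcol q).symm⟩

end Extension

theorem List.mem_foldr_union {α : Type} [DecidableEq α] {L : List (Finset α)} {a : α} :
    a ∈ L.foldr (· ∪ ·) ∅ ↔ ∃ s ∈ L, a ∈ s := by
  induction L <;> simp [*]

section Evaluation

variable {κ : Type} {k : ℕ} {A : Type} [DecidableEq A] [Fintype A] (M : HFModel A)
  (col : A → κ)

theorem evalForm_atom (σ : Fin k → A) (p : Fin k) :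
    evalForm M col σ (.atom p) = M.atom (σ p) := by
  rw [evalForm]

theorem mkSet_members_evalForm_set (σ : Fin k → A) (l : List (Form k κ × Config2 k κ)) :
    M.mkSet (M.members (evalForm M col σ (.set l))) = evalForm M col σ (.set l) := by
  rw [evalForm, M.members_mkSet]

theorem mem_members_evalForm {σ : Fin k → A} {φ : Form k κ} {w : M.Obj} :
    w ∈ M.members (evalForm M col σ φ) ↔
      ∃ x ∈ φ.children, ∃ τ : Fin k ↪ A, conf col τ σ = x.2 ∧ w = evalForm M col τ x.1 := by
  cases φ with
  | atom p => simp [evalForm_atom, M.members_atom]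
  | set l =>
    rw [evalForm, M.members_mkSet, List.mem_foldr_union]
    simp only [List.mem_map, List.mem_attach, true_and, Subtype.exists, Form.children_set]
    constructor
    · rintro ⟨_, ⟨x, hx, rfl⟩, hw⟩
      obtain ⟨τ, hτ, rfl⟩ := Finset.mem_image.1 hw
      rw [Finset.mem_filter] at hτ
      exact ⟨x, hx, ⟨τ, hτ.2.1⟩, hτ.2.2, rfl⟩
    · rintro ⟨x, hx, τ, hconf, rfl⟩
      exact ⟨_, ⟨x, hx, rfl⟩, Finset.mem_image_of_mem _
        (Finset.mem_filter.2 ⟨Finset.mem_univ _, τ.injective, hconf⟩)⟩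

theorem exists_eq_evalForm_of_mem_members_of_mem_members {α : Fin k → A} {χ : Form k κ}
    {w z : M.Obj} (hw : w ∈ M.members (evalForm M col α χ)) (hz : z ∈ M.members w) :
    ∃ (ψ : Form k κ) (τ : Fin k ↪ A), z = evalForm M col τ ψ := by
  obtain ⟨x, -, ρ, -, rfl⟩ := (mem_members_evalForm M col).1 hw
  obtain ⟨y, -, τ, -, rfl⟩ := (mem_members_evalForm M col).1 hz
  exact ⟨y.1, τ, rfl⟩

variable {M col}

theorem atom_ne_evalForm_set (a : A) (σ : Fin k → A) (l : List (Form k κ × Config2 k κ)) :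
    M.atom a ≠ evalForm M col σ (.set l) := fun h =>
  M.atom_ne_mkSet _ _ (h.trans (mkSet_members_evalForm_set M col σ l).symm)

theorem evalForm_set_eq_iff {σ τ : Fin k → A} {l m : List (Form k κ × Config2 k κ)} :
    evalForm M col σ (.set l) = evalForm M col τ (.set m) ↔
      M.members (evalForm M col σ (.set l)) = M.members (evalForm M col τ (.set m)) := by
  refine ⟨congrArg M.members, fun h => ?_⟩
  rw [← mkSet_members_evalForm_set M col σ l, h, mkSet_members_evalForm_set]

end Evaluation

section Kuratowski

variable {A : Type} (M : HFModel A) {x y z : M.Obj}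

theorem HFModel.mkSet_injective : Injective M.mkSet :=
  Function.LeftInverse.injective M.members_mkSet

theorem members_kpair : M.members (kpair M x y) = {M.mkSet {x}, M.mkSet {x, y}} :=
  M.members_mkSet _

theorem forall_mem_members_kpair_iff :
    (∀ w ∈ M.members (kpair M x y), z ∈ M.members w) ↔ z = x := by
  simp +contextual [members_kpair, M.members_mkSet]

theorem exists_mem_members_kpair_iff :
    (∃ w ∈ M.members (kpair M x y), z ∈ M.members w) ↔ z = x ∨ z = y := by
  simp [members_kpair, M.members_mkSet]

theorem members_kpair_eq_iff :
    (∀ w₁ ∈ M.members (kpair M x y), ∀ w₂ ∈ M.members (kpair M x y), w₁ = w₂) ↔ x = y := by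
  have hpair : ({x} : Finset M.Obj) = {x, y} ↔ x = y := by
    simp [Finset.ext_iff, eq_comm (a := y)]
  simp [members_kpair, M.mkSet_injective.eq_iff, eq_comm (a := ({x, y} : Finset M.Obj)), hpair]

end Kuratowski

section Transfer

variable {κ : Type} {k : ℕ} {A A' : Type} [DecidableEq A] [Fintype A] [DecidableEq A']
  [Fintype A'] {M : HFModel A} {col : A → κ} {M' : HFModel A'} {col' : A' → κ}

theorem exists_counterpart_of_mem_members (hrich' : IsRich k col') {μ ν : Fin k ↪ A}
    {μ' ν' : Fin k ↪ A'} (hc : conf col μ ν = conf col' μ' ν') {χ : Form k κ} {w : M.Obj}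
    (hw : w ∈ M.members (evalForm M col μ χ)) :
    ∃ x ∈ χ.children, ∃ (ρ : Fin k ↪ A) (ρ' : Fin k ↪ A'), w = evalForm M col ρ x.1 ∧
      evalForm M' col' ρ' x.1 ∈ M'.members (evalForm M' col' μ' χ) ∧
      conf col ρ ν = conf col' ρ' ν' := by
  obtain ⟨x, hx, ρ, hρ, rfl⟩ := (mem_members_evalForm M col).1 hw
  obtain ⟨ρ', hρ'μ, hρ'ν⟩ := exists_conf_extension hrich' hc ρ
  exact ⟨x, hx, ρ, ρ', rfl,
    (mem_members_evalForm M' col').2 ⟨x, hx, ρ', hρ'μ.trans hρ, rfl⟩, hρ'ν.symm⟩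

variable (M col M' col') in
def EqTransfers (φ ψ : Form k κ) : Prop :=
  ∀ (σ τ : Fin k ↪ A) (σ' τ' : Fin k ↪ A'), conf col σ τ = conf col' σ' τ' →
    evalForm M col σ φ = evalForm M col τ ψ → evalForm M' col' σ' φ = evalForm M' col' τ' ψ

theorem EqTransfers.symm {φ ψ : Form k κ} (h : EqTransfers M col M' col' φ ψ) :
    EqTransfers M col M' col' ψ φ := fun σ τ σ' τ' hc he =>
  (h τ σ τ' σ' (conf_swap hc) he.symm).symm

theorem mem_members_transfer_of_eqTransfers (hrich' : IsRich k col') {φ ψ : Form k κ}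
    (hφ : ∀ x ∈ ψ.children, EqTransfers M col M' col' φ x.1) {σ τ : Fin k ↪ A}
    {σ' τ' : Fin k ↪ A'} (hc : conf col σ τ = conf col' σ' τ')
    (h : evalForm M col σ φ ∈ M.members (evalForm M col τ ψ)) :
    evalForm M' col' σ' φ ∈ M'.members (evalForm M' col' τ' ψ) := by
  obtain ⟨x, hx, ρ, ρ', he, hmem, hρ⟩ :=
    exists_counterpart_of_mem_members hrich' (conf_swap hc) h
  rwa [hφ x hx σ ρ σ' ρ' (conf_swap hρ) he]

theorem members_subset_transfer (hrich : IsRich k col) (hrich' : IsRich k col')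
    {φ ψ : Form k κ}
    (hIH : ∀ x ∈ φ.children, ∀ y ∈ ψ.children, EqTransfers M col M' col' x.1 y.1)
    {σ τ : Fin k ↪ A} {σ' τ' : Fin k ↪ A'} (hc : conf col σ τ = conf col' σ' τ')
    (h : M.members (evalForm M col σ φ) ⊆ M.members (evalForm M col τ ψ)) :
    M'.members (evalForm M' col' σ' φ) ⊆ M'.members (evalForm M' col' τ' ψ) := by
  intro w' hw'
  obtain ⟨x, hx, ρ', ρ, rfl, hmem, hρ⟩ := exists_counterpart_of_mem_members hrich hc.symm hw'
  exact mem_members_transfer_of_eqTransfers hrich' (hIH x hx) hρ.symm (h hmem)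

theorem eqTransfers (hrich : IsRich k col) (hrich' : IsRich k col') (φ ψ : Form k κ) :
    EqTransfers M col M' col' φ ψ := by
  induction φ using Form.mem_induction generalizing ψ with
  | atom p =>
    intro σ τ σ' τ' hc h
    cases ψ with
    | atom q =>
      rw [evalForm_atom, evalForm_atom] at h ⊢
      exact congrArg M'.atom (((conf_eq_conf_iff.1 hc).1 p q).1 (M.atom_injective h))
    | set m =>
      rw [evalForm_atom] at h
      exact absurd h (atom_ne_evalForm_set _ _ _)
  | set l ih =>
    intro σ τ σ' τ' hc h
    cases ψ with
    | atom q =>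
      rw [evalForm_atom] at h
      exact absurd h.symm (atom_ne_evalForm_set _ _ _)
    | set m =>
      have hIH : ∀ x ∈ (Form.set l).children, ∀ y ∈ (Form.set m).children,
          EqTransfers M col M' col' x.1 y.1 := fun x hx y _ => ih x hx y.1
      rw [evalForm_set_eq_iff] at h ⊢
      exact (members_subset_transfer hrich hrich' hIH hc h.subset).antisymm
        (members_subset_transfer hrich hrich' (fun y hy x hx => (hIH x hx y hy).symm)
          (conf_swap hc) h.symm.subset)

theorem mem_members_transfer (hrich : IsRich k col) (hrich' : IsRich k col') {φ ψ : Form k κ}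
    {σ τ : Fin k ↪ A} {σ' τ' : Fin k ↪ A'} (hc : conf col σ τ = conf col' σ' τ')
    (h : evalForm M col σ φ ∈ M.members (evalForm M col τ ψ)) :
    evalForm M' col' σ' φ ∈ M'.members (evalForm M' col' τ' ψ) :=
  mem_members_transfer_of_eqTransfers hrich' (fun x _ => eqTransfers hrich hrich' φ x.1) hc h

variable {χ ψ : Form k κ} {α τ : Fin k ↪ A} {α' τ' : Fin k ↪ A'}

theorem forall_mem_members_transfer (hrich : IsRich k col) (hrich' : IsRich k col')
    (hc : conf col τ α = conf col' τ' α')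
    (h : ∀ w ∈ M.members (evalForm M col α χ), evalForm M col τ ψ ∈ M.members w) :
    ∀ w' ∈ M'.members (evalForm M' col' α' χ), evalForm M' col' τ' ψ ∈ M'.members w' := by
  intro w' hw'
  obtain ⟨x, -, ρ', ρ, rfl, hmem, hρ⟩ :=
    exists_counterpart_of_mem_members hrich (conf_swap hc).symm hw'
  exact mem_members_transfer hrich hrich' (conf_swap hρ.symm) (h _ hmem)

theorem exists_mem_members_transfer (hrich : IsRich k col) (hrich' : IsRich k col')
    (hc : conf col τ α = conf col' τ' α')
    (h : ∃ w ∈ M.members (evalForm M col α χ), evalForm M col τ ψ ∈ M.members w) :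
    ∃ w' ∈ M'.members (evalForm M' col' α' χ), evalForm M' col' τ' ψ ∈ M'.members w' := by
  obtain ⟨w, hw, hmem⟩ := h
  obtain ⟨x, -, ρ, ρ', rfl, hmem', hρ⟩ :=
    exists_counterpart_of_mem_members hrich' (conf_swap hc) hw
  exact ⟨_, hmem', mem_members_transfer hrich hrich' (conf_swap hρ) hmem⟩

theorem members_eq_transfer (hrich : IsRich k col) (hrich' : IsRich k col')
    (hc : conf col α α = conf col' α' α')
    (h : ∀ w₁ ∈ M.members (evalForm M col α χ), ∀ w₂ ∈ M.members (evalForm M col α χ),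
      w₁ = w₂) :
    ∀ w₁ ∈ M'.members (evalForm M' col' α' χ), ∀ w₂ ∈ M'.members (evalForm M' col' α' χ),
      w₁ = w₂ := by
  intro w₁ hw₁ w₂ hw₂
  obtain ⟨x₁, -, ρ₁', ρ₁, rfl, hmem₁, hρ₁⟩ :=
    exists_counterpart_of_mem_members hrich hc.symm hw₁
  obtain ⟨x₂, -, ρ₂', ρ₂, rfl, hmem₂, hρ₂⟩ :=
    exists_counterpart_of_mem_members hrich (conf_swap hρ₁) hw₂
  exact eqTransfers hrich hrich' x₁.1 x₂.1 ρ₁ ρ₂ ρ₁' ρ₂' (conf_swap hρ₂).symm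
    (h _ hmem₁ _ hmem₂)

theorem eq_snd_transfer (hrich : IsRich k col) (hrich' : IsRich k col') {x y : M.Obj}
    {x' y' : M'.Obj} (hc : conf col τ α = conf col' τ' α')
    (hP : evalForm M col α χ = kpair M x y) (hP' : evalForm M' col' α' χ = kpair M' x' y')
    (h : evalForm M col τ ψ = y) : evalForm M' col' τ' ψ = y' := by
  have hmem : ∃ w ∈ M.members (evalForm M col α χ), evalForm M col τ ψ ∈ M.members w := by
    rw [hP, exists_mem_members_kpair_iff]
    exact .inr h
  have hmem' := exists_mem_members_transfer (M' := M') hrich hrich' hc hmem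
  rw [hP', exists_mem_members_kpair_iff] at hmem'
  rcases hmem' with hx' | hy'
  · have hfst' : ∀ w ∈ M'.members (evalForm M' col' α' χ),
        evalForm M' col' τ' ψ ∈ M'.members w := by
      rw [hP', forall_mem_members_kpair_iff]
      exact hx'
    have hx : evalForm M col τ ψ = x := by
      have hfst := forall_mem_members_transfer (M' := M) hrich' hrich hc.symm hfst'
      rwa [hP, forall_mem_members_kpair_iff] at hfst
    have hsingle : ∀ w₁ ∈ M.members (evalForm M col α χ),
        ∀ w₂ ∈ M.members (evalForm M col α χ), w₁ = w₂ := by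
      rw [hP, members_kpair_eq_iff]
      exact hx.symm.trans h
    have hsingle' := members_eq_transfer (M' := M') hrich hrich'
      (conf_self_eq_of_conf_eq hc) hsingle
    rw [hP', members_kpair_eq_iff] at hsingle'
    rw [hx', hsingle']
  · exact hy'

theorem component_transfer (hrich : IsRich k col) (hrich' : IsRich k col') (φ : Form k κ) :
    ∀ {ℓ : ℕ} (j : Fin ℓ) {χ : Form k κ} {σ α : Fin k ↪ A} {σ' α' : Fin k ↪ A'}
      {comps : Fin ℓ → M.Obj} {comps' : Fin ℓ → M'.Obj}, conf col σ α = conf col' σ' α' →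
      evalForm M col α χ = tupleObj M ℓ comps → evalForm M' col' α' χ = tupleObj M' ℓ comps' →
      comps j = evalForm M col σ φ → comps' j = evalForm M' col' σ' φ
  | 1, 0, χ, σ, α, σ', α', comps, comps', hc, hP, hP', h => by
    rw [tupleObj] at hP hP'
    rw [← hP']
    exact eqTransfers hrich hrich' χ φ α σ α' σ' (conf_swap hc) (hP.trans h)
  | n + 2, ⟨0, _⟩, χ, σ, α, σ', α', comps, comps', hc, hP, hP', h => by
    rw [tupleObj] at hP hP'
    have hfst : ∀ w ∈ M.members (evalForm M col α χ), evalForm M col σ φ ∈ M.members w := by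
      rw [hP, forall_mem_members_kpair_iff]
      exact h.symm
    have hfst' := forall_mem_members_transfer (M' := M') hrich hrich' hc hfst
    rw [hP', forall_mem_members_kpair_iff] at hfst'
    exact hfst'.symm
  | n + 2, ⟨j + 1, hj⟩, χ, σ, α, σ', α', comps, comps', hc, hP, hP', h => by
    rw [tupleObj] at hP hP'
    set rest' := tupleObj M' (n + 1) fun i => comps' i.succ
    have hpair : M'.mkSet {comps' 0, rest'} ∈ M'.members (evalForm M' col' α' χ) := by
      simp [hP', members_kpair]
    obtain ⟨ψ, τ', hτ'⟩ := exists_eq_evalForm_of_mem_members_of_mem_members M' col' hpair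
      (z := rest') (by simp [M'.members_mkSet])
    obtain ⟨τ, hτσ, hτα⟩ := exists_conf_extension hrich hc.symm τ'
    have hτ : evalForm M col τ ψ = tupleObj M (n + 1) fun i => comps i.succ :=
      eq_snd_transfer hrich' hrich hτα.symm hP' hP hτ'.symm
    exact component_transfer hrich hrich' φ ⟨j, by omega⟩ (conf_swap hτσ) hτ hτ'.symm h

end Transfer

def ComponentRel {κ : Type} {k ℓ : ℕ} (j : Fin ℓ) (φ χ : Form k κ) (c : Config2 k κ) : Prop :=
  ∀ (A : Type) [DecidableEq A] [Fintype A] (M : HFModel A) (col : A → κ), IsRich k col →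
    ∀ (σ α : Fin k ↪ A), conf col σ α = c →
    ∀ comps : Fin ℓ → M.Obj, evalForm M col α χ = tupleObj M ℓ comps →
      comps j = evalForm M col σ φ

theorem component_relations_general {κ : Type} (k ℓ : ℕ) :
    ∃ Pi : Fin ℓ → (Form k κ → Form k κ → Config2 k κ → Prop),
      ∀ (A : Type) [DecidableEq A] [Fintype A],
        ∀ (M : HFModel A) (col : A → κ),
          (∀ c : κ, 3 * k ≤ (Finset.univ.filter (fun a : A => col a = c)).card) →
          ∀ (φ χ : Form k κ) (σ α : Fin k → A),
            Function.Injective σ → Function.Injective α →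
            ∀ comps : Fin ℓ → M.Obj,
              evalForm M col α χ = tupleObj M ℓ comps →
              ∀ j : Fin ℓ,
                (comps j = evalForm M col σ φ ↔ Pi j φ χ (conf col σ α)) := by
  refine ⟨ComponentRel, fun A _ _ M col hrich φ χ σ α hσ hα comps hP j => ⟨?_, ?_⟩⟩
  · intro h B _ _ M' col' hrich' σ' α' hc comps' hP'
    exact component_transfer hrich hrich' φ (σ := ⟨σ, hσ⟩) (α := ⟨α, hα⟩) j hc.symm hP hP' h
  · intro h
    exact h A M col hrich ⟨σ, hσ⟩ ⟨α, hα⟩ rfl comps hP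

/-- Component-extraction relations: for every `j` there is a ternary relation `Pi j`
on forms and configurations such that `φ * σ` is the `j`-th component of the
`ℓ`-tuple `χ * α` iff `Pi j φ χ (conf σ α)` holds. -/
theorem component_relations {κ : Type} (k ℓ : ℕ) (hℓ : 0 < ℓ) :
    ∃ Pi : Fin ℓ → (Form k κ → Form k κ → Config2 k κ → Prop),
      ∀ (A : Type) [DecidableEq A] [Fintype A],
        ∀ (M : HFModel A) (col : A → κ),
          (∀ c : κ, 3 * k ≤ (Finset.univ.filter (fun a : A => col a = c)).card) →
          ∀ (φ χ : Form k κ) (σ α : Fin k → A),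
            Function.Injective σ → Function.Injective α →
            ∀ comps : Fin ℓ → M.Obj,
              evalForm M col α χ = tupleObj M ℓ comps →
              ∀ j : Fin ℓ,
                (comps j = evalForm M col σ φ ↔ Pi j φ χ (conf col σ α)) :=
  component_relations_general k ℓ
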